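/- arXiv:1805.09750 — 3 statements merged into one kernel-verified Lean document; each statement's English description precedes it below -/
import Mathlib

section
/- Let α ≥ 1, c_1 > 0, and let (q_k)_{k≥0} be a sequence in [0,1] satisfying q_{k+1} ≤ q_k² + c_1 · 3^{-α k} for all k ≥ k_1, where k_1 is an integer with c_1 (1−ε)^{k_1 − 1} ≤ ε for some ε ∈ (0,1) with 1−ε ≥ 1/3. If q_{k_1 + 2} ≤ (1−ε)², then q_{k_1 + k} ≤ (1−ε)^k for all k ≥ 2. -/
theorem stmt4 (α c1 ε : ℝ) (hα : 1 ≤ α) (hc1 : 0 < c1)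
    (hε : 0 < ε ∧ ε < 1) (hε3 : (1 : ℝ) / 3 ≤ 1 - ε)
    (k1 : ℕ) (hk1 : 1 ≤ k1) (hchoice : c1 * (1 - ε) ^ (k1 - 1) ≤ ε)
    (q : ℕ → ℝ) (hq : ∀ k, 0 ≤ q k ∧ q k ≤ 1)
    (hrec : ∀ k, k1 ≤ k → q (k + 1) ≤ (q k) ^ 2 + c1 * (3 : ℝ) ^ (-(α * (k : ℝ))))
    (hbase : q (k1 + 2) ≤ (1 - ε) ^ 2) :
    ∀ k, 2 ≤ k → q (k1 + k) ≤ (1 - ε) ^ k := by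
  obtain ⟨hε0, hε1⟩ := hε
  have h1ε0 : (0:ℝ) ≤ 1 - ε := by linarith
  have h1ε1 : 1 - ε ≤ 1 := by linarith
  intro k hk
  induction k, hk using Nat.le_induction with
  | base => exact hbase
  | succ k hk ih =>
    set n := k1 + k with hn
    have hrk : q (n + 1) ≤ q n ^ 2 + c1 * (3:ℝ) ^ (-(α * (n : ℝ))) :=
      hrec n (by omega)
    have hq2 : q n ^ 2 ≤ (1 - ε) ^ (2 * k) := by
      rw [two_mul, pow_add]
      calc q n ^ 2 ≤ ((1 - ε) ^ k) ^ 2 := by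
            have := (hq n).1
            nlinarith [pow_nonneg h1ε0 k]
        _ = (1 - ε) ^ k * (1 - ε) ^ k := sq _
    have h3 : (3:ℝ) ^ (-(α * (n : ℝ))) ≤ (1 - ε) ^ n := by
      have hmono : (3:ℝ) ^ (-(α * (n : ℝ))) ≤ (3:ℝ) ^ (-((n:ℕ) : ℝ)) := by
        have h1 : (n:ℝ) ≤ α * n := by nlinarith [(Nat.cast_nonneg n : (0:ℝ) ≤ n)]
        exact Real.rpow_le_rpow_of_exponent_le (by norm_num : (1:ℝ) ≤ 3) (by linarith)
      have heq : (3:ℝ) ^ (-((n:ℕ) : ℝ)) = ((1:ℝ)/3) ^ n := by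
        rw [Real.rpow_neg (by norm_num), Real.rpow_natCast]
        simp [one_div, inv_pow]
      calc (3:ℝ) ^ (-(α * (n : ℝ))) ≤ ((1:ℝ)/3) ^ n := by rw [← heq]; exact hmono
        _ ≤ (1 - ε) ^ n := pow_le_pow_left₀ (by norm_num) hε3 n
    have key : q (n + 1) ≤ (1 - ε) ^ (2*k) + c1 * (1 - ε) ^ n := by
      have := mul_le_mul_of_nonneg_left h3 hc1.le
      linarith
    have e1 : (1 - ε) ^ (2*k) ≤ (1 - ε) ^ (k+1) * (1 - ε) := by
      have : 2*k = (k+1) + (k-1) := by omega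
      rw [this, pow_add]
      apply mul_le_mul_of_nonneg_left _ (pow_nonneg h1ε0 _)
      calc (1 - ε) ^ (k-1) ≤ (1 - ε) ^ 1 :=
            pow_le_pow_of_le_one h1ε0 h1ε1 (by omega)
        _ = 1 - ε := pow_one _
    have e2 : c1 * (1 - ε) ^ n ≤ ε * (1 - ε) ^ (k+1) := by
      have hne : n = (k1-1) + (k+1) := by omega
      rw [hne, pow_add, ← mul_assoc]
      exact mul_le_mul_of_nonneg_right hchoice (pow_nonneg h1ε0 _)
    have : q (n+1) ≤ (1 - ε) ^ (k+1) * (1 - ε) + ε * (1 - ε) ^ (k+1) := by linarith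
    have hfin : (1 - ε) ^ (k+1) * (1 - ε) + ε * (1 - ε) ^ (k+1) = (1 - ε) ^ (k+1) := by ring
    have hidx : k1 + (k+1) = n + 1 := by omega
    rw [hidx]
    linarith [this, hfin.le]
end

section
/- Let δ ∈ (0, 1/2], v_+ ∈ ℝ, r a positive integer, H ≥ 1 a real. Let X : [0, rH] → ℝ be a function (position of a walker) with X(0) = x. Suppose there exist j_0 ∈ {0, …, r−1} and a real y' with (3/4)δH ≤ y' − (x + j_0 H v_+) ≤ 2δH such that whenever X(j_0 H) ≤ y' one has X((j_0+1)H) ≤ y' + (v_+ − 3δ)H. If for all j ∈ {0, …, r−1} we have X((j+1)H) − X(jH) < (v_+ + δ/(2r))H, then X(rH) − x ≤ (v_+ − δ/(2r)) rH. -/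
/-!
Per block of length `H` the walker advances by less than `(v₊ + D) H`, where `D = δ / (2r)`,
so over `j₀` blocks it gains at most `j₀ D H < 3δH/4` on the drift `v₊`. It therefore cannot
have passed `y'` by time `j₀ H`, the trap applies and costs at least `δ H` against the drift
in block `j₀`, and the remaining `r - j₀ - 1` blocks give back less than `r D H = δ H / 2` of it.
-/

theorem sub_le_mul_of_forall_succ_sub_le {f : ℕ → ℝ} {c : ℝ} {a b : ℕ} (hab : a ≤ b)
    (h : ∀ k, a ≤ k → k < b → f (k + 1) - f k ≤ c) : f b - f a ≤ ((b : ℝ) - a) * c := by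
  induction b, hab using Nat.le_induction with
  | base => simp
  | succ n han ih =>
    have hlast := h n han n.lt_succ_self
    have hinit := ih fun k hak hkn => h k hak (hkn.trans n.lt_succ_self)
    push_cast
    linarith

theorem stmt6 (δ vplus H x y' : ℝ) (r j0 : ℕ)
    (hδ : 0 < δ ∧ δ ≤ 1 / 2) (hr : 1 ≤ r) (hH : 1 ≤ H)
    (X : ℝ → ℝ) (hX0 : X 0 = x)
    (hj0 : j0 ≤ r - 1)
    (hy'lo : (3 / 4) * δ * H ≤ y' - (x + (j0 : ℝ) * H * vplus))
    (hy'hi : y' - (x + (j0 : ℝ) * H * vplus) ≤ 2 * δ * H)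
    (htrap : X ((j0 : ℝ) * H) ≤ y' → X (((j0 : ℝ) + 1) * H) ≤ y' + (vplus - 3 * δ) * H)
    (hslow : ∀ j : ℕ, j < r →
      X (((j : ℝ) + 1) * H) - X ((j : ℝ) * H) < (vplus + δ / (2 * (r : ℝ))) * H) :
    X ((r : ℝ) * H) - x ≤ (vplus - δ / (2 * (r : ℝ))) * ((r : ℝ) * H) := by
  obtain ⟨hδ0, -⟩ := hδ
  have hr0 : (0 : ℝ) < r := by exact_mod_cast hr
  have hrD : (r : ℝ) * (δ / (2 * r)) = δ / 2 := by field_simp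
  set D := δ / (2 * (r : ℝ))
  have hD : 0 ≤ D := by positivity
  have hH0 : 0 ≤ H := by linarith
  have hrDH : (r : ℝ) * D * H = δ / 2 * H := by rw [hrD]
  have hdisp : ∀ a b : ℕ, a ≤ b → b ≤ r →
      X (b * H) - X (a * H) ≤ ((b : ℝ) - a) * ((vplus + D) * H) := fun a b hab hbr =>
    sub_le_mul_of_forall_succ_sub_le (f := fun k : ℕ => X (k * H)) hab fun k _ hkb => by
      simpa using (hslow k (by omega)).le
  rcases le_or_gt (X (j0 * H)) y' with htrapped | hescaped
  · have hafter := htrap htrapped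
    have hrest := hdisp (j0 + 1) r (by omega) le_rfl
    push_cast at hrest
    linarith [mul_nonneg (mul_nonneg (by positivity : (0 : ℝ) ≤ j0 + 1) hD) hH0]
  · exfalso
    have hbefore := hdisp 0 j0 (Nat.zero_le _) (by omega)
    simp only [Nat.cast_zero, zero_mul, hX0, sub_zero] at hbefore
    have hgain : 3 / 4 * δ * H < j0 * D * H := by linarith
    have hj0r : (j0 : ℝ) ≤ r := by exact_mod_cast (by omega : j0 ≤ r)
    have hgain_le : j0 * D * H ≤ r * D * H := by gcongr
    linarith [mul_nonneg hδ0.le hH0]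
end

section
/- Let α > 5, and fix reals a, b > 0. Define for integers k the quantity p_k ∈ [0,1] and suppose p_{k+1} ≤ 25 l_k^4 (p_k² + c (h L_k)^{-α}) + 5 l_k² c' e^{-c'' h L_k} for constants c, c', c'' > 0 and h ≥ 1, where L_k, l_k are the scales L_0 = 10^10, l_k = ⌊L_k^{1/4}⌋, L_{k+1} = l_k L_k. Then there exists a constant k* (depending only on α, c, c', c'') such that: if p_k ≤ L_k^{-α/2} for some k ≥ k*, then p_{k+1} ≤ L_{k+1}^{-α/2}. -/
noncomputable def Lseq : ℕ → ℕ
  | 0 => 10 ^ 10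
  | k + 1 => ⌊((Lseq k : ℝ)) ^ ((1 : ℝ) / 4)⌋₊ * Lseq k

noncomputable def lseq (k : ℕ) : ℕ := ⌊((Lseq k : ℝ)) ^ ((1 : ℝ) / 4)⌋₊

lemma Lseq_ge : ∀ k, 10 ^ 10 ≤ Lseq k := by
  intro k
  induction k with
  | zero => simp [Lseq]
  | succ n ih =>
    have hL0 : (0:ℝ) < (Lseq n : ℝ) := by positivity
    have h2 : (2:ℝ) ≤ ((Lseq n : ℝ)) ^ ((1:ℝ)/4) := by
      have h16 : (16:ℝ) ≤ (Lseq n : ℝ) := by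
        have : (16:ℕ) ≤ Lseq n := le_trans (by norm_num) ih
        exact_mod_cast this
      calc (2:ℝ) = (16:ℝ) ^ ((1:ℝ)/4) := by
            rw [show (16:ℝ) = 2 ^ (4:ℕ) by norm_num, ← Real.rpow_natCast 2 4,
              ← Real.rpow_mul (by norm_num)]
            norm_num
        _ ≤ _ := Real.rpow_le_rpow (by norm_num) h16 (by norm_num)
    have hl : 2 ≤ ⌊((Lseq n : ℝ)) ^ ((1:ℝ)/4)⌋₊ := Nat.le_floor (by exact_mod_cast h2)
    calc 10 ^ 10 ≤ Lseq n := ih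
      _ ≤ ⌊((Lseq n : ℝ)) ^ ((1:ℝ)/4)⌋₊ * Lseq n :=
          Nat.le_mul_of_pos_left _ (by omega)
      _ = Lseq (n + 1) := rfl

lemma lseq_ge (k : ℕ) : 2 ≤ lseq k := by
  have ih := Lseq_ge k
  have h2 : (2:ℝ) ≤ ((Lseq k : ℝ)) ^ ((1:ℝ)/4) := by
    have h16 : (16:ℝ) ≤ (Lseq k : ℝ) := by
      have : (16:ℕ) ≤ Lseq k := le_trans (by norm_num) ih
      exact_mod_cast this
    calc (2:ℝ) = (16:ℝ) ^ ((1:ℝ)/4) := by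
          rw [show (16:ℝ) = 2 ^ (4:ℕ) by norm_num, ← Real.rpow_natCast 2 4,
            ← Real.rpow_mul (by norm_num)]
          norm_num
      _ ≤ _ := Real.rpow_le_rpow (by norm_num) h16 (by norm_num)
  exact Nat.le_floor (by exact_mod_cast h2)

lemma Lseq_ge_self : ∀ k, k ≤ Lseq k := by
  intro k
  induction k with
  | zero => exact Nat.zero_le _
  | succ n ih =>
    have h1 : 1 ≤ Lseq n := le_trans (by norm_num) (Lseq_ge n)
    have : 2 * Lseq n ≤ lseq n * Lseq n :=
      Nat.mul_le_mul_right _ (lseq_ge n)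
    have hrec : Lseq (n + 1) = lseq n * Lseq n := rfl
    omega

theorem stmt7 (α : ℝ) (hα : 5 < α) (c c' c'' : ℝ) (hc : 0 < c) (hc' : 0 < c') (hc'' : 0 < c'') :
    ∃ kstar : ℕ, ∀ (h : ℝ), 1 ≤ h → ∀ (p : ℕ → ℝ),
      (∀ k, 0 ≤ p k ∧ p k ≤ 1) →
      (∀ k : ℕ, p (k + 1) ≤ 25 * (lseq k : ℝ) ^ 4 * ((p k) ^ 2 + c * (h * (Lseq k : ℝ)) ^ (-α)) +
        5 * (lseq k : ℝ) ^ 2 * c' * Real.exp (-(c'' * h * (Lseq k : ℝ)))) →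
      ∀ k, kstar ≤ k → p k ≤ (Lseq k : ℝ) ^ (-(α / 2)) →
        p (k + 1) ≤ (Lseq (k + 1) : ℝ) ^ (-(α / 2)) := by
  -- the error function
  set F : ℝ → ℝ := fun x => 25 * (1 + c) * x ^ (1 - 3 * α / 8) +
    5 * c' * (x ^ (1 + 5 * α / 8) * Real.exp (-(c'' * x))) with hF
  have hFt : Filter.Tendsto F Filter.atTop (nhds 0) := by
    have h1 : Filter.Tendsto (fun x : ℝ => x ^ (1 - 3 * α / 8)) Filter.atTop (nhds 0) := by
      have := tendsto_rpow_neg_atTop (by linarith : (0:ℝ) < 3 * α / 8 - 1)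
      simpa [neg_sub] using this
    have h2 := tendsto_rpow_mul_exp_neg_mul_atTop_nhds_zero (1 + 5 * α / 8) c'' hc''
    have := ((h1.const_mul (25 * (1 + c))).add (h2.const_mul (5 * c')))
    simpa [neg_mul] using this
  obtain ⟨M, hM⟩ := (Filter.eventually_atTop).1 (hFt.eventually_le_const (by norm_num : (0:ℝ) < 1))
  refine ⟨⌈M⌉₊, ?_⟩
  intro h hh p hp01 hrec k hk hp
  set L : ℝ := (Lseq k : ℝ) with hLdef
  have hL10 : (10:ℝ)^10 ≤ L := by rw [hLdef]; exact_mod_cast Lseq_ge k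
  have hL1 : (1:ℝ) ≤ L := le_trans (by norm_num) hL10
  have hL0 : (0:ℝ) < L := lt_of_lt_of_le one_pos hL1
  have hLM : M ≤ L := by
    calc M ≤ (⌈M⌉₊ : ℝ) := Nat.le_ceil M
      _ ≤ (k : ℝ) := by exact_mod_cast hk
      _ ≤ L := by rw [hLdef]; exact_mod_cast Lseq_ge_self k
  have hFL : F L ≤ 1 := hM L hLM
  -- basic bounds
  have hfl : (lseq k : ℝ) ≤ L ^ ((1:ℝ)/4) :=
    Nat.floor_le (Real.rpow_nonneg hL0.le _)
  have h2 : (lseq k : ℝ) ^ 4 ≤ L := by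
    calc (lseq k : ℝ) ^ 4 ≤ (L ^ ((1:ℝ)/4)) ^ 4 :=
          pow_le_pow_left₀ (Nat.cast_nonneg _) hfl 4
      _ = L := by
          rw [← Real.rpow_natCast (L ^ ((1:ℝ)/4)) 4, ← Real.rpow_mul hL0.le]
          norm_num
  have h3 : (lseq k : ℝ) ^ 2 ≤ L := by
    calc (lseq k : ℝ) ^ 2 ≤ (L ^ ((1:ℝ)/4)) ^ 2 :=
          pow_le_pow_left₀ (Nat.cast_nonneg _) hfl 2
      _ = L ^ ((1:ℝ)/2) := by
          rw [← Real.rpow_natCast (L ^ ((1:ℝ)/4)) 2, ← Real.rpow_mul hL0.le]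
          norm_num
      _ ≤ L ^ (1:ℝ) := Real.rpow_le_rpow_of_exponent_le hL1 (by norm_num)
      _ = L := Real.rpow_one L
  have h4 : p k ^ 2 ≤ L ^ (-α) := by
    calc p k ^ 2 ≤ (L ^ (-(α/2))) ^ 2 := pow_le_pow_left₀ (hp01 k).1 hp 2
      _ = L ^ (-α) := by
          rw [← Real.rpow_natCast (L ^ (-(α/2))) 2, ← Real.rpow_mul hL0.le]
          ring_nf
  have h5 : (h * L) ^ (-α) ≤ L ^ (-α) :=
    Real.rpow_le_rpow_of_nonpos hL0 (le_mul_of_one_le_left hL0.le hh) (by linarith)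
  have h6 : Real.exp (-(c'' * h * L)) ≤ Real.exp (-(c'' * L)) := by
    apply Real.exp_le_exp.2
    nlinarith [mul_le_mul_of_nonneg_left hh (mul_pos hc'' hL0).le]
  have h7 : (Lseq (k + 1) : ℝ) ≤ L ^ ((5:ℝ)/4) := by
    have : (Lseq (k + 1) : ℝ) = (lseq k : ℝ) * L := by
      rw [hLdef, show Lseq (k+1) = lseq k * Lseq k from rfl]; push_cast; ring
    rw [this]
    calc (lseq k : ℝ) * L ≤ L ^ ((1:ℝ)/4) * L :=
          mul_le_mul_of_nonneg_right hfl hL0.le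
      _ = L ^ ((5:ℝ)/4) := by
          nth_rewrite 2 [← Real.rpow_one L]
          rw [← Real.rpow_add hL0]; norm_num
  have hLk1pos : (0:ℝ) < (Lseq (k + 1) : ℝ) := by
    have := Lseq_ge (k + 1)
    have : (0:ℕ) < Lseq (k + 1) := by omega
    exact_mod_cast this
  have h8 : L ^ (-(5 * α / 8)) ≤ (Lseq (k + 1) : ℝ) ^ (-(α/2)) := by
    calc (Lseq (k + 1) : ℝ) ^ (-(α/2)) ≥ (L ^ ((5:ℝ)/4)) ^ (-(α/2)) :=
          Real.rpow_le_rpow_of_nonpos hLk1pos h7 (by linarith)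
      _ = L ^ (-(5 * α / 8)) := by
          rw [← Real.rpow_mul hL0.le]; ring_nf
  -- key rpow identities
  have e1 : L * L ^ (-α) = L ^ (1 - 3 * α / 8) * L ^ (-(5 * α / 8)) := by
    rw [← Real.rpow_add hL0]
    nth_rewrite 1 [← Real.rpow_one L]
    rw [← Real.rpow_add hL0]
    ring_nf
  have e2 : L ^ (1 + 5 * α / 8) * L ^ (-(5 * α / 8)) = L := by
    rw [← Real.rpow_add hL0, show 1 + 5 * α / 8 + -(5 * α / 8) = 1 by ring, Real.rpow_one]
  calc p (k + 1) ≤ 25 * (lseq k : ℝ) ^ 4 * ((p k) ^ 2 + c * (h * L) ^ (-α)) +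
        5 * (lseq k : ℝ) ^ 2 * c' * Real.exp (-(c'' * h * L)) := hrec k
    _ ≤ 25 * L * (L ^ (-α) + c * L ^ (-α)) + 5 * L * c' * Real.exp (-(c'' * L)) := by
        have hx : (0:ℝ) ≤ L ^ (-α) := Real.rpow_nonneg hL0.le _
        have hx2 : (0:ℝ) ≤ (h * L) ^ (-α) := Real.rpow_nonneg (by nlinarith) _
        have hp0 := (hp01 k).1
        have hl4 : (0:ℝ) ≤ (lseq k : ℝ) ^ 4 := by positivity
        have hl2 : (0:ℝ) ≤ (lseq k : ℝ) ^ 2 := by positivity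
        have he : (0:ℝ) ≤ Real.exp (-(c'' * h * L)) := (Real.exp_pos _).le
        gcongr
    _ = F L * L ^ (-(5 * α / 8)) := by
        rw [hF]
        linear_combination (25*(1+c))*e1 - (5*c'*Real.exp (-(c'' * L)))*e2
    _ ≤ 1 * L ^ (-(5 * α / 8)) :=
        mul_le_mul_of_nonneg_right hFL (Real.rpow_nonneg hL0.le _)
    _ ≤ (Lseq (k + 1) : ℝ) ^ (-(α/2)) := by rw [one_mul]; exact h8
end
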